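/- Let Ω ⊆ ℝ³ be open and let u : Ω → ℝ be smooth and harmonic with u < 1 and ∇u ≠ 0 on Ω, and set X := ∇u/(1−u) + ∇|∇u|/(1−u)² + (|∇u|/(1−u)³)·∇u. At each point of Ω define ν := ∇u/|∇u|, let P := Id − ν⊗ν be the orthogonal projection onto the hyperplane ν^⊥, and set H := −D²u(ν,ν)/|∇u|, |h|² := ‖P∘D²u∘P‖²/|∇u|², |h̊|² := |h|² − H²/2, and |∇^Σ|∇u||² := |P(D²u·ν)|². Then at every point of Ω: div X = (|∇u|/(1−u)²)·[ |∇u| − (H² − |h|²)/2 + |∇^Σ|∇u||²/|∇u|² + |h̊|²/2 + (3/4)·(2|∇u|/(1−u) − H)² ]. -/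

import Mathlib

noncomputable section

open scoped RealInnerProductSpace

abbrev E3 : Type := EuclideanSpace ℝ (Fin 3)

/-- Hessian of `u` at `x`, viewed as a continuous linear map `v ↦ D²u(x)·v`. -/
noncomputable def hess (u : E3 → ℝ) (x : E3) : E3 →L[ℝ] E3 :=
  fderiv ℝ (gradient u) x

/-- Hessian of `u` at `x` as a bilinear form: `D²u(x)(v,w)`. -/
noncomputable def hessBil (u : E3 → ℝ) (x : E3) (v w : E3) : ℝ :=
  ⟪hess u x v, w⟫

/-- Laplacian of `u` at `x`: the trace of the Hessian. -/
noncomputable def lap (u : E3 → ℝ) (x : E3) : ℝ :=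
  LinearMap.trace ℝ E3 (hess u x : E3 →ₗ[ℝ] E3)

/-- Divergence of a vector field `X` at `x`: the trace of its derivative. -/
noncomputable def vdiv (X : E3 → E3) (x : E3) : ℝ :=
  LinearMap.trace ℝ E3 (fderiv ℝ X x : E3 →ₗ[ℝ] E3)

/-- Squared Frobenius (Hilbert–Schmidt) norm of a linear map on `ℝ³`. -/
noncomputable def frobSq (A : E3 →L[ℝ] E3) : ℝ :=
  ∑ i : Fin 3, ‖A (EuclideanSpace.basisFun (Fin 3) ℝ i)‖ ^ 2

/-- The orthogonal projection `Id - ν ⊗ ν` onto the hyperplane `ν^⊥`. -/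
noncomputable def projPerp (ν : E3) : E3 →L[ℝ] E3 :=
  ContinuousLinearMap.id ℝ E3 - (innerSL ℝ ν).smulRight ν

/-! ### Auxiliary lemmas -/

local notation "ee" => EuclideanSpace.basisFun (Fin 3) ℝ

private theorem lem_trace_sum (B : E3 →L[ℝ] E3) :
    LinearMap.trace ℝ E3 (B : E3 →ₗ[ℝ] E3) = ∑ i : Fin 3, ⟪B (ee i), ee i⟫ := by
  rw [LinearMap.trace_eq_matrix_trace ℝ (EuclideanSpace.basisFun (Fin 3) ℝ).toBasis]
  simp [Matrix.trace, LinearMap.toMatrix_apply, EuclideanSpace.inner_single_right,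
    EuclideanSpace.basisFun_apply, Matrix.diag]

private theorem lem_parseval (v w : E3) :
    ∑ i : Fin 3, ⟪v, ee i⟫ * ⟪w, ee i⟫ = ⟪v, w⟫ := by
  simp [EuclideanSpace.inner_single_right, EuclideanSpace.basisFun_apply, real_inner_comm,
    PiLp.inner_apply, mul_comm]

private theorem lem_reconstruct (B : E3 →L[ℝ] E3) (v : E3) :
    ∑ i : Fin 3, ⟪v, ee i⟫ • B (ee i) = B v := by
  calc ∑ i : Fin 3, ⟪v, ee i⟫ • B (ee i)
      = B (∑ i : Fin 3, ⟪v, ee i⟫ • ee i) := by rw [map_sum]; simp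
    _ = B v := by
        congr 1
        simpa [EuclideanSpace.inner_single_right, EuclideanSpace.basisFun_apply,
          EuclideanSpace.basisFun_repr, real_inner_comm] using
          (EuclideanSpace.basisFun (Fin 3) ℝ).sum_repr v

private theorem lem_trace_smulRight (c : E3 →L[ℝ] ℝ) (v : E3) :
    LinearMap.trace ℝ E3 ((c.smulRight v) : E3 →ₗ[ℝ] E3) = c v := by
  rw [lem_trace_sum]
  have h : ∀ i : Fin 3, ⟪(c.smulRight v) (ee i), ee i⟫ = c (⟪v, ee i⟫ • ee i) := by
    intro i
    simp [ContinuousLinearMap.smulRight_apply, real_inner_smul_left, mul_comm]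
  simp only [h, ← map_sum]
  congr 1
  simpa [EuclideanSpace.inner_single_right, EuclideanSpace.basisFun_apply,
    EuclideanSpace.basisFun_repr, real_inner_comm] using
    (EuclideanSpace.basisFun (Fin 3) ℝ).sum_repr v

private theorem lem_trace_comp_self (A : E3 →L[ℝ] E3)
    (hsym : ∀ v w : E3, ⟪A v, w⟫ = ⟪A w, v⟫) :
    LinearMap.trace ℝ E3 ((A.comp A) : E3 →ₗ[ℝ] E3) = frobSq A := by
  rw [lem_trace_sum, frobSq]
  refine Finset.sum_congr rfl fun i _ => ?_
  rw [ContinuousLinearMap.comp_apply, hsym, ← real_inner_self_eq_norm_sq, real_inner_comm]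

private theorem tr_add (S T : E3 →L[ℝ] E3) :
    LinearMap.trace ℝ E3 ((S + T : E3 →L[ℝ] E3) : E3 →ₗ[ℝ] E3)
      = LinearMap.trace ℝ E3 (S : E3 →ₗ[ℝ] E3) + LinearMap.trace ℝ E3 (T : E3 →ₗ[ℝ] E3) := by
  rw [lem_trace_sum, lem_trace_sum, lem_trace_sum, ← Finset.sum_add_distrib]
  simp [inner_add_left]

private theorem tr_smul (c : ℝ) (S : E3 →L[ℝ] E3) :
    LinearMap.trace ℝ E3 ((c • S : E3 →L[ℝ] E3) : E3 →ₗ[ℝ] E3)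
      = c * LinearMap.trace ℝ E3 (S : E3 →ₗ[ℝ] E3) := by
  rw [lem_trace_sum, lem_trace_sum, Finset.mul_sum]
  simp [real_inner_smul_left]

private theorem projPerp_apply' (ν w : E3) : projPerp ν w = w - ⟪ν, w⟫ • ν := by
  simp [projPerp]

private theorem projPerp_nu (ν : E3) (hν : ‖ν‖ = 1) : projPerp ν ν = 0 := by
  rw [projPerp_apply', real_inner_self_eq_norm_sq, hν]
  simp

private theorem projPerp_normSq (ν : E3) (hν : ‖ν‖ = 1) (w : E3) :
    ‖projPerp ν w‖ ^ 2 = ‖w‖ ^ 2 - ⟪ν, w⟫ ^ 2 := by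
  rw [projPerp_apply', norm_sub_sq_real]
  rw [real_inner_smul_right, norm_smul, real_inner_comm]
  simp only [hν, mul_one]
  rw [Real.norm_eq_abs, sq_abs, real_inner_comm ν w]
  ring

private theorem frob_decomp (A : E3 →L[ℝ] E3) (ν : E3) (hν : ‖ν‖ = 1)
    (hsym : ∀ v w : E3, ⟪A v, w⟫ = ⟪A w, v⟫) :
    frobSq A = frobSq ((projPerp ν).comp (A.comp (projPerp ν)))
      + 2 * ‖projPerp ν (A ν)‖ ^ 2 + ⟪A ν, ν⟫ ^ 2 := by
  set P := projPerp ν with hP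
  set B := P.comp (A.comp P) with hB
  have hBnu : B ν = 0 := by
    rw [hB]; simp [hP, projPerp_nu ν hν]
  have step1 : frobSq A = (∑ i : Fin 3, ‖P (A (ee i))‖ ^ 2) + ‖A ν‖ ^ 2 := by
    have h2 : ∀ i : Fin 3, ‖A (ee i)‖ ^ 2 = ‖P (A (ee i))‖ ^ 2 + ⟪A ν, ee i⟫ ^ 2 := by
      intro i
      rw [projPerp_normSq ν hν]
      have h3 : ⟪ν, A (ee i)⟫ = ⟪A ν, ee i⟫ := by
        rw [real_inner_comm, hsym]
      rw [h3]; ring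
    rw [frobSq]
    simp only [h2, Finset.sum_add_distrib]
    congr 1
    rw [← real_inner_self_eq_norm_sq, ← lem_parseval]
    simp [pow_two]
  have step2 : ‖A ν‖ ^ 2 = ‖P (A ν)‖ ^ 2 + ⟪A ν, ν⟫ ^ 2 := by
    rw [projPerp_normSq ν hν, real_inner_comm ν (A ν)]; ring
  have step3 : (∑ i : Fin 3, ‖P (A (ee i))‖ ^ 2)
      = frobSq B + ‖P (A ν)‖ ^ 2 := by
    have hdec : ∀ i : Fin 3, P (A (ee i)) = B (ee i) + ⟪ν, ee i⟫ • P (A ν) := by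
      intro i
      have h4 : A (ee i) = A (P (ee i)) + ⟪ν, ee i⟫ • A ν := by
        rw [hP, projPerp_apply', map_sub, map_smul]; abel
      rw [h4, map_add, map_smul, hB]; simp
    have hnorm : ∀ i : Fin 3, ‖P (A (ee i))‖ ^ 2
        = ‖B (ee i)‖ ^ 2 + 2 * (⟪ν, ee i⟫ * ⟪B (ee i), P (A ν)⟫)
          + ⟪ν, ee i⟫ ^ 2 * ‖P (A ν)‖ ^ 2 := by
      intro i
      rw [hdec i, norm_add_sq_real, real_inner_smul_right, norm_smul,
        Real.norm_eq_abs, mul_pow, sq_abs]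
    simp only [hnorm, Finset.sum_add_distrib]
    have hcross : ∑ i : Fin 3, 2 * (⟪ν, ee i⟫ * ⟪B (ee i), P (A ν)⟫) = 0 := by
      rw [← Finset.mul_sum]
      have h5 : ∑ i : Fin 3, ⟪ν, ee i⟫ * ⟪B (ee i), P (A ν)⟫
          = ⟪∑ i : Fin 3, ⟪ν, ee i⟫ • B (ee i), P (A ν)⟫ := by
        rw [sum_inner]
        exact Finset.sum_congr rfl fun i _ => (real_inner_smul_left _ _ _).symm
      rw [h5, lem_reconstruct, hBnu, inner_zero_left]
      ring
    have hlast : ∑ i : Fin 3, ⟪ν, ee i⟫ ^ 2 * ‖P (A ν)‖ ^ 2 = ‖P (A ν)‖ ^ 2 := by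
      rw [← Finset.sum_mul]
      have h6 : ∑ i : Fin 3, ⟪ν, ee i⟫ ^ 2 = 1 := by
        have h7 := lem_parseval ν ν
        rw [real_inner_self_eq_norm_sq, hν] at h7
        simpa [pow_two] using h7
      rw [h6, one_mul]
    rw [hcross, hlast, frobSq]
    ring
  rw [step1, step2, step3]
  ring

private theorem innerSL_smul' (c : ℝ) (w : E3) : innerSL ℝ (c • w) = c • innerSL ℝ w := by
  ext v; simp [real_inner_smul_left]

private theorem innerSL_neg' (w : E3) : innerSL ℝ (-w) = -(innerSL ℝ w) := by
  ext v; simp [inner_neg_left]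

private theorem innerSL_add' (v w : E3) : innerSL ℝ (v + w) = innerSL ℝ v + innerSL ℝ w := by
  ext z; simp [inner_add_left]

private theorem lem_grad_contDiffAt {u : E3 → ℝ} {x : E3} (hu : ContDiffAt ℝ (⊤ : ℕ∞) u x) :
    ContDiffAt ℝ (⊤ : ℕ∞) (gradient u) x := by
  have h1 : ContDiffAt ℝ (⊤ : ℕ∞) (fderiv ℝ u) x := hu.fderiv_right (by simp)
  exact ContDiffAt.comp x ((InnerProductSpace.toDual ℝ E3).symm.contDiff.contDiffAt) h1

private theorem lem_hessBil_fderiv (u : E3 → ℝ) (x v w : E3) :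
    ⟪hess u x v, w⟫ = fderiv ℝ (fderiv ℝ u) x v w := by
  have h : gradient u = (InnerProductSpace.toDual ℝ E3).symm ∘ (fderiv ℝ u) := rfl
  rw [hess, h, LinearIsometryEquiv.comp_fderiv]
  simp only [ContinuousLinearMap.coe_comp', Function.comp_apply, LinearIsometryEquiv.coe_coe]
  exact InnerProductSpace.toDual_symm_apply

private theorem lem_hess_symm {u : E3 → ℝ} {x : E3} (hu : ContDiffAt ℝ (⊤ : ℕ∞) u x) :
    ∀ v w : E3, ⟪hess u x v, w⟫ = ⟪hess u x w, v⟫ := by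
  intro v w
  rw [lem_hessBil_fderiv, lem_hessBil_fderiv]
  exact hu.isSymmSndFDerivAt (by rw [minSmoothness_of_isRCLikeNormedField]; exact WithTop.coe_le_coe.2 le_top) v w

private theorem norm_grad (g : E3 → E3) (A : E3 →L[ℝ] E3) (y : E3) (hg : HasFDerivAt g A y)
    (hne : g y ≠ 0) (hsym : ∀ v w : E3, ⟪A v, w⟫ = ⟪A w, v⟫) :
    HasGradientAt (fun z => ‖g z‖) (‖g y‖⁻¹ • A (g y)) y := by
  have h1 : HasFDerivAt (fun z => ⟪g z, g z⟫)
      ((fderivInnerCLM ℝ (g y, g y)).comp (A.prod A)) y := hg.inner (𝕜 := ℝ) hg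
  have hq : ⟪g y, g y⟫ ≠ 0 := by
    rw [real_inner_self_eq_norm_sq]
    exact pow_ne_zero _ (norm_ne_zero_iff.2 hne)
  have h2 := (Real.hasDerivAt_sqrt hq).comp_hasFDerivAt y h1
  have h3 : (fun z => ‖g z‖) = ((fun t => Real.sqrt t) ∘ fun z => ⟪g z, g z⟫) := by
    funext z
    simp only [Function.comp_apply, real_inner_self_eq_norm_sq, Real.sqrt_sq (norm_nonneg _)]
  rw [hasGradientAt_iff_hasFDerivAt, h3]
  refine h2.congr_fderiv ?_
  ext v
  have hnrm : Real.sqrt ⟪g y, g y⟫ = ‖g y‖ := by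
    rw [real_inner_self_eq_norm_sq, Real.sqrt_sq (norm_nonneg _)]
  simp only [ContinuousLinearMap.coe_smul', Pi.smul_apply, ContinuousLinearMap.coe_comp',
    Function.comp_apply, ContinuousLinearMap.prod_apply, fderivInnerCLM_apply,
    InnerProductSpace.toDual_apply_apply, hnrm, smul_eq_mul]
  rw [real_inner_smul_left, hsym (g y) v, real_inner_comm (g y) (A v)]
  have hgy : ‖g y‖ ≠ 0 := norm_ne_zero_iff.2 hne
  field_simp
  ring

private theorem lem_gradient_innerSL {φ : E3 → ℝ} {w x : E3} (h : HasGradientAt φ w x) :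
    HasFDerivAt φ (innerSL ℝ w) x := by
  rw [hasGradientAt_iff_hasFDerivAt] at h
  refine h.congr_fderiv ?_
  ext v
  simp [InnerProductSpace.toDual_apply_apply]

private theorem lem_inv {φ : E3 → ℝ} {w : E3} {x : E3}
    (h : HasFDerivAt φ (innerSL ℝ w) x) (h0 : φ x ≠ 0) :
    HasFDerivAt (fun y => (φ y)⁻¹) (innerSL ℝ ((-(φ x ^ 2)⁻¹) • w)) x := by
  have h1 := (hasDerivAt_inv h0).comp_hasFDerivAt x h
  exact h1.congr_fderiv (by rw [innerSL_smul'])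

private theorem lem_pow {φ : E3 → ℝ} {w : E3} {x : E3} (n : ℕ)
    (h : HasFDerivAt φ (innerSL ℝ w) x) :
    HasFDerivAt (fun y => (φ y) ^ n) (innerSL ℝ (((n : ℝ) * φ x ^ (n - 1)) • w)) x := by
  have h1 := (hasDerivAt_pow n (φ x)).comp_hasFDerivAt x h
  exact h1.congr_fderiv (by rw [innerSL_smul'])

private theorem lem_mul {φ ψ : E3 → ℝ} {w1 w2 : E3} {x : E3}
    (h1 : HasFDerivAt φ (innerSL ℝ w1) x) (h2 : HasFDerivAt ψ (innerSL ℝ w2) x) :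
    HasFDerivAt (fun y => φ y * ψ y) (innerSL ℝ (φ x • w2 + ψ x • w1)) x := by
  have h3 := h1.mul h2
  exact h3.congr_fderiv (by rw [innerSL_add', innerSL_smul', innerSL_smul'])

/-- The trace, as a continuous linear map on operators. -/
private noncomputable def traceCLM : (E3 →L[ℝ] E3) →L[ℝ] ℝ :=
  LinearMap.toContinuousLinearMap
    ((LinearMap.trace ℝ E3) ∘ₗ (ContinuousLinearMap.coeLM ℝ))

private theorem traceCLM_apply (B : E3 →L[ℝ] E3) :
    traceCLM B = LinearMap.trace ℝ E3 (B : E3 →ₗ[ℝ] E3) := rfl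

set_option maxHeartbeats 2000000 in
theorem div_X_geometric_form (Ω : Set E3) (hΩ : IsOpen Ω) (u : E3 → ℝ)
    (hu : ContDiffOn ℝ (⊤ : ℕ∞) u Ω)
    (hharm : ∀ x ∈ Ω, lap u x = 0)
    (hu1 : ∀ x ∈ Ω, u x < 1)
    (hgrad : ∀ x ∈ Ω, gradient u x ≠ 0)
    (X : E3 → E3)
    (hX : ∀ x ∈ Ω, X x =
      (1 - u x)⁻¹ • gradient u x
        + ((1 - u x) ^ 2)⁻¹ • gradient (fun y => ‖gradient u y‖) x
        + (‖gradient u x‖ / (1 - u x) ^ 3) • gradient u x) :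
    ∀ x ∈ Ω,
      let ν : E3 := ‖gradient u x‖⁻¹ • gradient u x
      let P : E3 →L[ℝ] E3 := projPerp ν
      let H : ℝ := -hessBil u x ν ν / ‖gradient u x‖
      let hSq : ℝ := frobSq (P.comp ((hess u x).comp P)) / ‖gradient u x‖ ^ 2
      let hRingSq : ℝ := hSq - H ^ 2 / 2
      let tangGradSq : ℝ := ‖P (hess u x ν)‖ ^ 2
      vdiv X x =
        ‖gradient u x‖ / (1 - u x) ^ 2 *
          (‖gradient u x‖
            - (H ^ 2 - hSq) / 2
            + tangGradSq / ‖gradient u x‖ ^ 2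
            + hRingSq / 2
            + 3 / 4 * (2 * ‖gradient u x‖ / (1 - u x) - H) ^ 2) := by
  intro x hx
  intro ν P H hSq hRingSq tangGradSq
  have hν : ν = ‖gradient u x‖⁻¹ • gradient u x := rfl
  have hP : P = projPerp ν := rfl
  have hH : H = -hessBil u x ν ν / ‖gradient u x‖ := rfl
  have hhSq : hSq = frobSq (P.comp ((hess u x).comp P)) / ‖gradient u x‖ ^ 2 := rfl
  have hring : hRingSq = hSq - H ^ 2 / 2 := rfl
  have ht : tangGradSq = ‖P (hess u x ν)‖ ^ 2 := rfl
  clear_value ν P H hSq hRingSq tangGradSq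
  -- basic facts
  have hxn : Ω ∈ nhds x := hΩ.mem_nhds hx
  have hUat : ∀ y ∈ Ω, ContDiffAt ℝ (⊤ : ℕ∞) u y := fun y hy => hu.contDiffAt (hΩ.mem_nhds hy)
  have hgrad_cd : ∀ y ∈ Ω, ContDiffAt ℝ (⊤ : ℕ∞) (gradient u) y :=
    fun y hy => lem_grad_contDiffAt (hUat y hy)
  have hhess_fd : ∀ y ∈ Ω, HasFDerivAt (gradient u) (hess u y) y :=
    fun y hy => ((hgrad_cd y hy).differentiableAt (by simp)).hasFDerivAt
  have hsymA : ∀ y ∈ Ω, ∀ v w : E3, ⟪hess u y v, w⟫ = ⟪hess u y w, v⟫ :=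
    fun y hy => lem_hess_symm (hUat y hy)
  set gx := gradient u x with hgx_def
  set A := hess u x with hA_def
  set a := ‖gx‖ with ha_def
  set b := 1 - u x with hb_def
  have hgx0 : gx ≠ 0 := hgrad x hx
  have hapos : 0 < a := norm_pos_iff.2 hgx0
  have ha : a ≠ 0 := ne_of_gt hapos
  have hb0 : b ≠ 0 := by
    have := hu1 x hx
    rw [hb_def]
    intro hcontra
    nlinarith [hcontra]
  -- second derivative of the gradient
  set A' := fderiv ℝ (fun y => hess u y) x with hA'_def
  have hhess_cd : ContDiffAt ℝ (⊤ : ℕ∞) (fun y => hess u y) x :=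
    (hgrad_cd x hx).fderiv_right (by simp)
  have hA' : HasFDerivAt (fun y => hess u y) A' x :=
    (hhess_cd.differentiableAt (by simp)).hasFDerivAt
  have hswap : ∀ v w : E3, A' v w = A' w v :=
    (hgrad_cd x hx).isSymmSndFDerivAt (by rw [minSmoothness_of_isRCLikeNormedField]; exact WithTop.coe_le_coe.2 le_top)
  -- harmonicity: trace of A and of A' w vanish
  have htrA : LinearMap.trace ℝ E3 (A : E3 →ₗ[ℝ] E3) = 0 := hharm x hx
  have htr0 : ∀ w : E3, LinearMap.trace ℝ E3 ((A' w : E3 →L[ℝ] E3) : E3 →ₗ[ℝ] E3) = 0 := by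
    have hlapc : HasFDerivAt (fun y => lap u y) (traceCLM.comp A') x :=
      traceCLM.hasFDerivAt.comp x hA'
    have hev0 : (fun y => lap u y) =ᶠ[nhds x] fun _ => (0 : ℝ) := by
      filter_upwards [hxn] with y hy using hharm y hy
    have h0 : fderiv ℝ (fun y => lap u y) x = 0 := by
      rw [hev0.fderiv_eq]
      exact fderiv_const_apply 0
    have hzero : traceCLM.comp A' = 0 := by rw [← hlapc.fderiv, h0]
    intro w
    have := congrFun (congrArg (fun (T : E3 →L[ℝ] ℝ) => (T : E3 → ℝ)) hzero) w
    simpa [traceCLM_apply] using this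
  have htrflip : LinearMap.trace ℝ E3 ((A'.flip gx : E3 →L[ℝ] E3) : E3 →ₗ[ℝ] E3) = 0 := by
    rw [lem_trace_sum]
    have h : ∀ i : Fin 3, ⟪(A'.flip gx) (ee i), ee i⟫ = ⟪(A' gx) (ee i), ee i⟫ := by
      intro i
      rw [ContinuousLinearMap.flip_apply, hswap]
    rw [Finset.sum_congr rfl (fun i _ => h i), ← lem_trace_sum, htr0 gx]
  have htrAA : LinearMap.trace ℝ E3 ((A.comp A : E3 →L[ℝ] E3) : E3 →ₗ[ℝ] E3) = frobSq A :=
    lem_trace_comp_self A (hsymA x hx)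
  -- first derivatives of the scalar building blocks
  have hu_fd : HasFDerivAt u (innerSL ℝ gx) x := by
    have h := ((hUat x hx).differentiableAt (by simp)).hasGradientAt
    exact lem_gradient_innerSL h
  have h1mu : HasFDerivAt (fun y => 1 - u y) (innerSL ℝ (-gx)) x := by
    have h := hu_fd.const_sub 1
    exact h.congr_fderiv (innerSL_neg' gx).symm
  have hc1 : HasFDerivAt (fun y => (1 - u y)⁻¹) (innerSL ℝ ((b ^ 2)⁻¹ • gx)) x := by
    have h := lem_inv h1mu hb0
    refine h.congr_fderiv ?_
    congr 1
    rw [smul_neg, ← neg_smul, neg_neg]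
  have hsq2 : HasFDerivAt (fun y => (1 - u y) ^ 2)
      (innerSL ℝ ((((2 : ℕ) : ℝ) * b ^ (2 - 1)) • (-gx))) x := lem_pow 2 h1mu
  have hc2 : HasFDerivAt (fun y => ((1 - u y) ^ 2)⁻¹) (innerSL ℝ ((2 / b ^ 3) • gx)) x := by
    have h := lem_inv hsq2 (pow_ne_zero 2 hb0)
    refine h.congr_fderiv ?_
    congr 1
    rw [← hb_def]
    match_scalars
    field_simp
    ring
  have hcube : HasFDerivAt (fun y => (1 - u y) ^ 3)
      (innerSL ℝ ((((3 : ℕ) : ℝ) * b ^ (3 - 1)) • (-gx))) x := lem_pow 3 h1mu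
  have hc3 : HasFDerivAt (fun y => ((1 - u y) ^ 3)⁻¹) (innerSL ℝ ((3 / b ^ 4) • gx)) x := by
    have h := lem_inv hcube (pow_ne_zero 3 hb0)
    refine h.congr_fderiv ?_
    congr 1
    rw [← hb_def]
    match_scalars
    field_simp
  -- gradient of |∇u|
  set Fx := a⁻¹ • A gx with hFx_def
  have hnorm_fd : HasFDerivAt (fun y => ‖gradient u y‖) (innerSL ℝ Fx) x :=
    lem_gradient_innerSL (norm_grad (gradient u) A x (hhess_fd x hx) hgx0 (hsymA x hx))
  have hcinv : HasFDerivAt (fun y => ‖gradient u y‖⁻¹) (innerSL ℝ ((-(a ^ 2)⁻¹) • Fx)) x :=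
    lem_inv hnorm_fd ha
  have happ : HasFDerivAt (fun y => hess u y (gradient u y))
      (A.comp A + A'.flip gx) x := by
    have h := hA'.clm_apply (hhess_fd x hx)
    exact h
  set GF : E3 → E3 := fun y => ‖gradient u y‖⁻¹ • hess u y (gradient u y) with hGF_def
  set DF : E3 →L[ℝ] E3 :=
    a⁻¹ • (A.comp A + A'.flip gx) + (innerSL ℝ ((-(a ^ 2)⁻¹) • Fx)).smulRight (A gx)
    with hDF_def
  have hGF : HasFDerivAt GF DF x := hcinv.smul happ
  -- the three terms
  have hT1 : HasFDerivAt (fun y => (1 - u y)⁻¹ • gradient u y)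
      (b⁻¹ • A + (innerSL ℝ ((b ^ 2)⁻¹ • gx)).smulRight gx) x :=
    hc1.smul (hhess_fd x hx)
  have hT2 : HasFDerivAt (fun y => ((1 - u y) ^ 2)⁻¹ • GF y)
      ((b ^ 2)⁻¹ • DF + (innerSL ℝ ((2 / b ^ 3) • gx)).smulRight Fx) x :=
    hc2.smul hGF
  have hmul : HasFDerivAt (fun y => ‖gradient u y‖ * ((1 - u y) ^ 3)⁻¹)
      (innerSL ℝ (a • ((3 / b ^ 4) • gx) + (b ^ 3)⁻¹ • Fx)) x :=
    lem_mul hnorm_fd hc3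
  have hT3 : HasFDerivAt (fun y => (‖gradient u y‖ * ((1 - u y) ^ 3)⁻¹) • gradient u y)
      ((a * (b ^ 3)⁻¹) • A
        + (innerSL ℝ (a • ((3 / b ^ 4) • gx) + (b ^ 3)⁻¹ • Fx)).smulRight gx) x :=
    hmul.smul (hhess_fd x hx)
  -- assemble X
  set Dtot : E3 →L[ℝ] E3 :=
    (b⁻¹ • A + (innerSL ℝ ((b ^ 2)⁻¹ • gx)).smulRight gx)
    + ((b ^ 2)⁻¹ • DF + (innerSL ℝ ((2 / b ^ 3) • gx)).smulRight Fx)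
    + ((a * (b ^ 3)⁻¹) • A
        + (innerSL ℝ (a • ((3 / b ^ 4) • gx) + (b ^ 3)⁻¹ • Fx)).smulRight gx)
    with hDtot_def
  have hXfd : HasFDerivAt X Dtot x := by
    have hsum : HasFDerivAt (fun y =>
        (1 - u y)⁻¹ • gradient u y
        + ((1 - u y) ^ 2)⁻¹ • GF y
        + (‖gradient u y‖ * ((1 - u y) ^ 3)⁻¹) • gradient u y) Dtot x :=
      (hT1.add hT2).add hT3
    refine hsum.congr_of_eventuallyEq ?_
    filter_upwards [hxn] with y hy
    rw [hX y hy]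
    have hGFy : gradient (fun z => ‖gradient u z‖) y = GF y :=
      (norm_grad (gradient u) (hess u y) y (hhess_fd y hy) (hgrad y hy) (hsymA y hy)).gradient
    rw [hGFy, div_eq_mul_inv]
  -- compute the divergence
  have hval : vdiv X x =
      a ^ 2 / b ^ 2 + (b ^ 2)⁻¹ * (a⁻¹ * frobSq A - (a ^ 2)⁻¹ * (a⁻¹ * ⟪A gx, A gx⟫))
        + (2 / b ^ 3) * (a⁻¹ * ⟪A gx, gx⟫) + ((b ^ 3)⁻¹ * (a⁻¹ * ⟪A gx, gx⟫)
        + (3 / b ^ 4) * a * a ^ 2) := by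
    have h0 : vdiv X x = LinearMap.trace ℝ E3 ((Dtot : E3 →L[ℝ] E3) : E3 →ₗ[ℝ] E3) := by
      show LinearMap.trace ℝ E3 ((fderiv ℝ X x : E3 →L[ℝ] E3) : E3 →ₗ[ℝ] E3) = _
      rw [hXfd.fderiv]
    rw [h0, hDtot_def, hDF_def]
    simp only [tr_add, tr_smul, lem_trace_smulRight]
    rw [htrA, htrAA, htrflip]
    simp only [innerSL_apply_apply, hFx_def, inner_add_left, real_inner_smul_left,
      real_inner_smul_right, smul_eq_mul, neg_mul, mul_neg]
    rw [real_inner_comm gx (A gx), real_inner_self_eq_norm_sq, ← ha_def]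
    ring
  -- geometric identities
  have hν1 : ‖ν‖ = 1 := by
    rw [hν, norm_smul, norm_inv, Real.norm_eq_abs, abs_of_pos hapos, ← ha_def]
    exact inv_mul_cancel₀ ha
  have hgxν : gx = a • ν := by
    rw [hν, smul_smul, mul_inv_cancel₀ ha, one_smul]
  have hAgν : A gx = a • A ν := by
    rw [hgxν]
    exact A.map_smul a ν
  have hbil : hessBil u x ν ν = ⟪A ν, ν⟫ := rfl
  have hfrob : frobSq A = frobSq (P.comp (A.comp P)) + 2 * tangGradSq + ⟪A ν, ν⟫ ^ 2 := by
    rw [ht, hP]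
    exact frob_decomp A ν hν1 (hsymA x hx)
  have hAA : ⟪A gx, A gx⟫ = a ^ 2 * (tangGradSq + ⟪A ν, ν⟫ ^ 2) := by
    rw [hAgν, real_inner_smul_left, real_inner_smul_right, ht, hP,
      real_inner_self_eq_norm_sq, projPerp_normSq ν hν1 (A ν), real_inner_comm ν (A ν)]
    ring
  have hAg : ⟪A gx, gx⟫ = a ^ 2 * ⟪A ν, ν⟫ := by
    rw [hgxν, A.map_smul, real_inner_smul_left, real_inner_smul_right]
    ring
  rw [hval, hfrob, hAA, hAg, hring, hhSq, hH, hbil]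
  generalize ⟪A ν, ν⟫ = q
  generalize frobSq (P.comp (A.comp P)) = s
  clear_value a b
  field_simp
  ring
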